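/- Fix an integer d ≥ 1 and a complex number q with q ≠ 0 and q ≠ 1. Define p_0 = q^{−d}, p_k = q^{−d+k−1}(q − 1) for k = 1,...,d, let P = P̃ = diag(p_0, p_1, ..., p_d), and let U = (u_{i,j})_{0≤i,j≤d} be given by u_{i,j} = 1 when i + j ≤ d, u_{i,j} = 1/(1 − q) when i + j = d + 1, and u_{i,j} = 0 when i + j > d + 1. Then with ν = 1/p_0 = q^d one has ν P U P̃ Uᵗ = I_{d+1}, i.e. (ν, P, P̃, U) ∈ K_d. -/

import Mathlib

/-!
Row `j` of `U` is `1` up to column `d - j`, then `(1 - q)⁻¹`, then `0`, and the partial sums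
`p_0 + ⋯ + p_m` telescope to `q ^ (m - d)`. Hence for `i ≤ j` the `p`-weighted inner product of
rows `i` and `j` is `q ^ (-j) * (1 - u_{i, d-j+1})`: it vanishes for `i < j` (then
`u_{i, d-j+1} = 1`), and for `i = j ≥ 1` it is `q ^ (1 - j) / (q - 1)`, which is exactly
`(ν p_j)⁻¹` (for `i = j = 0` it is the full sum `1 = (ν p_0)⁻¹`).
-/

open Matrix Finset

theorem Matrix.diagonal_mul_mul_diagonal_mul_transpose_apply {n R : Type*} [Fintype n]
    [DecidableEq n] [CommSemiring R] (p : n → R) (U : Matrix n n R) (i j : n) :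
    (diagonal p * U * diagonal p * Uᵀ) i j = p i * ∑ k, p k * U i k * U j k := by
  rw [mul_apply, Finset.mul_sum]
  simp only [mul_diagonal, diagonal_mul, transpose_apply]
  exact sum_congr rfl fun k _ => by ring

noncomputable section

variable (q : ℂ) (d : ℕ)

def pCoeff (k : ℕ) : ℂ :=
  if k = 0 then q ^ (-(d : ℤ)) else q ^ (-(d : ℤ) + k - 1) * (q - 1)

def uCoeff (i j : ℕ) : ℂ :=
  if i + j ≤ d then 1 else if i + j = d + 1 then (1 - q)⁻¹ else 0

def pGram (i j : ℕ) : ℂ :=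
  ∑ k ∈ range (d + 1), pCoeff q d k * uCoeff q d i k * uCoeff q d j k

variable {q d}

theorem pow_mul_pCoeff_zero (hq : q ≠ 0) : q ^ d * pCoeff q d 0 = 1 := by
  rw [pCoeff, if_pos rfl, _root_.zpow_neg, zpow_natCast, mul_inv_cancel₀ (pow_ne_zero d hq)]

theorem pow_mul_pCoeff_succ (hq : q ≠ 0) (k : ℕ) :
    q ^ d * pCoeff q d (k + 1) = q ^ k * (q - 1) := by
  rw [pCoeff, if_neg k.succ_ne_zero, ← mul_assoc, ← zpow_natCast, ← zpow_add₀ hq,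
    show (d : ℤ) + (-(d : ℤ) + ((k + 1 : ℕ) : ℤ) - 1) = k by push_cast; ring, zpow_natCast]

theorem pow_mul_sum_range_pCoeff (hq : q ≠ 0) (m : ℕ) :
    q ^ d * ∑ k ∈ range (m + 1), pCoeff q d k = q ^ m := by
  induction m with
  | zero => simpa using pow_mul_pCoeff_zero hq
  | succ m ih => rw [sum_range_succ, mul_add, ih, pow_mul_pCoeff_succ hq]; ring

theorem uCoeff_of_le {i j : ℕ} (h : i + j ≤ d) : uCoeff q d i j = 1 := if_pos h

theorem uCoeff_of_eq {i j : ℕ} (h : i + j = d + 1) : uCoeff q d i j = (1 - q)⁻¹ := by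
  rw [uCoeff, if_neg (by omega), if_pos h]

theorem uCoeff_of_lt {i j : ℕ} (h : d + 1 < i + j) : uCoeff q d i j = 0 := by
  rw [uCoeff, if_neg (by omega), if_neg (by omega)]

theorem pGram_comm (i j : ℕ) : pGram q d i j = pGram q d j i :=
  sum_congr rfl fun _ _ => mul_right_comm _ _ _

theorem pow_mul_pGram_of_le (hq0 : q ≠ 0) (hq1 : q ≠ 1) {i j : ℕ} (hj : 0 < j) (hjd : j ≤ d)
    (hij : i ≤ j) :
    q ^ d * pGram q d i j = q ^ (d - j) * (1 - uCoeff q d i (d - j + 1)) := by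
  have htrunc : pGram q d i j =
      ∑ k ∈ range (d - j + 1 + 1), pCoeff q d k * uCoeff q d i k * uCoeff q d j k := by
    refine (sum_subset (range_subset_range.2 (by omega)) fun k _ hk => ?_).symm
    rw [mem_range] at hk
    rw [uCoeff_of_lt (i := j) (by omega), mul_zero]
  have hhead : ∑ k ∈ range (d - j + 1), pCoeff q d k * uCoeff q d i k * uCoeff q d j k =
      ∑ k ∈ range (d - j + 1), pCoeff q d k :=
    sum_congr rfl fun k hk => by
      rw [mem_range] at hk
      rw [uCoeff_of_le (by omega), uCoeff_of_le (by omega), mul_one, mul_one]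
  have hq : (q - 1) * (1 - q)⁻¹ = -1 := by
    rw [← neg_sub, neg_mul, mul_inv_cancel₀ (sub_ne_zero.2 hq1.symm)]
  rw [htrunc, sum_range_succ, hhead, mul_add, pow_mul_sum_range_pCoeff hq0, ← mul_assoc,
    ← mul_assoc, pow_mul_pCoeff_succ hq0, uCoeff_of_eq (i := j) (by omega)]
  linear_combination q ^ (d - j) * uCoeff q d i (d - j + 1) * hq

theorem pGram_eq_zero_of_lt (hq0 : q ≠ 0) (hq1 : q ≠ 1) {i j : ℕ} (hij : i < j) (hjd : j ≤ d) :
    pGram q d i j = 0 := by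
  have h := pow_mul_pGram_of_le hq0 hq1 (by omega) hjd hij.le
  rw [uCoeff_of_le (by omega), sub_self, mul_zero] at h
  exact (mul_eq_zero.1 h).resolve_left (pow_ne_zero d hq0)

theorem pow_mul_pCoeff_mul_pGram_self (hq0 : q ≠ 0) (hq1 : q ≠ 1) {j : ℕ} (hjd : j ≤ d) :
    q ^ d * (pCoeff q d j * pGram q d j j) = 1 := by
  rcases j with _ | m
  · have hrow : pGram q d 0 0 = ∑ k ∈ range (d + 1), pCoeff q d k :=
      sum_congr rfl fun k hk => by
        rw [mem_range] at hk
        rw [uCoeff_of_le (by omega), mul_one, mul_one]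
    rw [hrow, mul_left_comm, pow_mul_sum_range_pCoeff hq0, mul_comm, pow_mul_pCoeff_zero hq0]
  · refine mul_left_cancel₀ (pow_ne_zero d hq0) ?_
    rw [← mul_assoc, mul_mul_mul_comm, pow_mul_pCoeff_succ hq0,
      pow_mul_pGram_of_le hq0 hq1 m.succ_pos hjd le_rfl, uCoeff_of_eq (by omega)]
    obtain ⟨r, rfl⟩ := Nat.exists_eq_add_of_le hjd
    have h1q : (1 : ℂ) - q ≠ 0 := sub_ne_zero.2 hq1.symm
    rw [Nat.add_sub_cancel_left]
    field_simp
    ring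

theorem pow_mul_pCoeff_mul_pGram (hq0 : q ≠ 0) (hq1 : q ≠ 1) {i j : ℕ} (hi : i ≤ d)
    (hj : j ≤ d) : q ^ d * (pCoeff q d i * pGram q d i j) = if i = j then 1 else 0 := by
  rcases lt_trichotomy i j with hij | rfl | hji
  · rw [pGram_eq_zero_of_lt hq0 hq1 hij hj, mul_zero, mul_zero, if_neg hij.ne]
  · rw [pow_mul_pCoeff_mul_pGram_self hq0 hq1 hi, if_pos rfl]
  · rw [pGram_comm, pGram_eq_zero_of_lt hq0 hq1 hji hi, mul_zero, mul_zero, if_neg hji.ne']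

end

theorem stmt_19_general (d : ℕ) (q : ℂ) (hq0 : q ≠ 0) (hq1 : q ≠ 1)
    (p : Fin (d+1) → ℂ)
    (hp0 : p 0 = q ^ (-(d : ℤ)))
    (hpk : ∀ k : Fin (d+1), (k : ℕ) ≠ 0 →
      p k = q ^ (-(d : ℤ) + (k : ℕ) - 1) * (q - 1))
    (U : Matrix (Fin (d+1)) (Fin (d+1)) ℂ)
    (hU : ∀ i j : Fin (d+1), U i j =
      if (i : ℕ) + (j : ℕ) ≤ d then 1
      else if (i : ℕ) + (j : ℕ) = d + 1 then (1 - q)⁻¹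
      else 0)
    (ν : ℂ) (hν : ν = q ^ (d : ℕ)) :
    ν = 1 / p 0 ∧
      ν • (Matrix.diagonal p * U * Matrix.diagonal p * U.transpose) = 1 := by
  have hp : ∀ k : Fin (d + 1), p k = pCoeff q d k := fun k => by
    by_cases hk : (k : ℕ) = 0
    · rw [pCoeff, if_pos hk, ← hp0, show k = 0 from Fin.ext hk]
    · rw [pCoeff, if_neg hk, hpk k hk]
  have hU' : ∀ i j : Fin (d + 1), U i j = uCoeff q d i j := hU
  subst hν
  refine ⟨eq_one_div_of_mul_eq_one_left ?_, ?_⟩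
  · rw [hp, Fin.val_zero, pow_mul_pCoeff_zero hq0]
  · ext i j
    rw [Matrix.smul_apply, diagonal_mul_mul_diagonal_mul_transpose_apply, smul_eq_mul]
    simp only [hp, hU']
    rw [Fin.sum_univ_eq_sum_range (fun k => pCoeff q d k * uCoeff q d i k * uCoeff q d j k),
      one_apply]
    simpa only [Fin.val_inj, pGram] using pow_mul_pCoeff_mul_pGram hq0 hq1 i.is_le j.is_le

theorem stmt_19 (d : ℕ) (hd : 1 ≤ d) (q : ℂ) (hq0 : q ≠ 0) (hq1 : q ≠ 1)
    (p : Fin (d+1) → ℂ)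
    (hp0 : p 0 = q ^ (-(d : ℤ)))
    (hpk : ∀ k : Fin (d+1), (k : ℕ) ≠ 0 →
      p k = q ^ (-(d : ℤ) + (k : ℕ) - 1) * (q - 1))
    (U : Matrix (Fin (d+1)) (Fin (d+1)) ℂ)
    (hU : ∀ i j : Fin (d+1), U i j =
      if (i : ℕ) + (j : ℕ) ≤ d then 1
      else if (i : ℕ) + (j : ℕ) = d + 1 then (1 - q)⁻¹
      else 0)
    (ν : ℂ) (hν : ν = q ^ (d : ℕ)) :
    ν = 1 / p 0 ∧
      ν • (Matrix.diagonal p * U * Matrix.diagonal p * U.transpose) = 1 :=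
  stmt_19_general d q hq0 hq1 p hp0 hpk U hU ν hν
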